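/- Milner's interleaving expansion law fails for all strongly FR truly concurrent bisimilarities: for actions α and β, (1) α ∥ β is NOT strongly FR pomset bisimilar to α.β + β.α; (2) α ∥ β is NOT strongly FR step bisimilar to α.β + β.α; (3) α ∥ β is NOT strongly FR hp-bisimilar to α.β + β.α; (4) α ∥ β is NOT strongly FR hhp-bisimilar to α.β + β.α. -/
import Mathlib


namespace RCTC

/-- Labels: a name together with a polarity; complementation flips the polarity. -/
abbrev Label := ℕ × Bool

/-- Complementation of labels. -/
def Label.bar (l : Label) : Label := (l.1, !l.2)

/-- Actions: forward labels, the silent action `τ`, and past labels `l[m]` with key `m`. -/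
inductive Act : Type
  | pre  : Label → Act
  | tau  : Act
  | post : Label → ℕ → Act
  deriving DecidableEq

namespace Act

/-- Attach a communication key to an action, turning it into a past action `α[m]`. -/
def withKey : Act → ℕ → Act
  | .pre l, m => .post l m
  | .tau, _ => .tau
  | .post l _, m => .post l m

/-- Relabelling applied to actions (`f(τ) = τ`). -/
def rename (f : Label → Label) : Act → Act
  | .pre l => .pre (f l)
  | .tau => .tau
  | .post l m => .post (f l) m

/-- The underlying label of an action, if any (`τ` has no label). -/
def label? : Act → Option Label
  | .pre l => some l
  | .tau => none
  | .post l _ => some l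

/-- Erase the communication key of an action (used to compare pomsets up to keys). -/
def core : Act → Act
  | .post l _ => .pre l
  | a => a

end Act

/-- RCTC process syntax.  The prefix `α.P` is `seq (act α) P`, the past suffix `P.α[m]`
is `seq P (act (α.withKey m))`, and multi-prefixes use parallel compositions of actions. -/
inductive Proc : Type
  | const : ℕ → Proc
  | nil : Proc
  | act : Act → Proc
  | seq : Proc → Proc → Proc
  | sum : Proc → Proc → Proc
  | par : Proc → Proc → Proc
  | restrict : Proc → Set Label → Proc
  | relabel : Proc → (Label → Label) → Proc

/-- The process `α₁ ∥ ⋯ ∥ αₙ`. -/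
def parAll : List Act → Proc
  | [] => .nil
  | [a] => .act a
  | a :: b :: as => .par (.act a) (parAll (b :: as))

/-- Parallel composition of a list of processes. -/
def parAllProc : List Proc → Proc
  | [] => .nil
  | [P] => P
  | P :: Q :: Ps => .par P (parAllProc (Q :: Ps))

/-- Summation of a list of processes. -/
def sumAll : List Proc → Proc
  | [] => .nil
  | [P] => P
  | P :: Q :: Ps => .sum P (sumAll (Q :: Ps))

/-- Prefix `α.P`. -/
def pref (a : Act) (P : Proc) : Proc := .seq (.act a) P

/-- Multi-prefix `(α₁ ∥ ⋯ ∥ αₙ).P`. -/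
def multiPref (as : List Act) (P : Proc) : Proc := .seq (parAll as) P

/-- Past suffix `P.α[m]`. -/
def suff (P : Proc) (a : Act) (m : ℕ) : Proc := .seq P (.act (a.withKey m))

/-- Multi past suffix `P.(α₁[m] ∥ ⋯ ∥ αₙ[m])`. -/
def multiSuff (P : Proc) (as : List Act) (m : ℕ) : Proc :=
  .seq P (parAll (as.map (fun a => a.withKey m)))

/-- `Std P`: `P` is a standard process, containing no past actions. -/
def Std : Proc → Prop
  | .const _ => True
  | .nil => True
  | .act (.post _ _) => False
  | .act _ => True
  | .seq P Q => Std P ∧ Std Q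
  | .sum P Q => Std P ∧ Std Q
  | .par P Q => Std P ∧ Std Q
  | .restrict P _ => Std P
  | .relabel P _ => Std P

/-- `NStd P`: `P` consists only of past actions. -/
def NStd : Proc → Prop
  | .const _ => False
  | .nil => True
  | .act (.post _ _) => True
  | .act _ => False
  | .seq P Q => NStd P ∧ NStd Q
  | .sum P Q => NStd P ∧ NStd Q
  | .par P Q => NStd P ∧ NStd Q
  | .restrict P _ => NStd P
  | .relabel P _ => NStd P

/-- The sort `ℒ(P)` of a process, given sorts `cs` for the process constants. -/
def sort (cs : ℕ → Set Label) : Proc → Set Label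
  | .const A => cs A
  | .nil => ∅
  | .act (.pre l) => {l}
  | .act .tau => ∅
  | .act (.post l _) => {l}
  | .seq P Q => sort cs P ∪ sort cs Q
  | .sum P Q => sort cs P ∪ sort cs Q
  | .par P Q => sort cs P ∪ sort cs Q
  | .restrict P L => sort cs P \ (L ∪ Label.bar '' L)
  | .relabel P f => f '' sort cs P

/-- An environment: defining equations `A ≝ defs A` for the process constants, together
with sorts for the constants satisfying `ℒ(P) ⊆ ℒ(A)` whenever `A ≝ P`. -/
structure Env where
  defs : ℕ → Proc
  constSort : ℕ → Set Label
  sort_le : ∀ A, sort constSort (defs A) ⊆ constSort A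

/-- Forward (step) transitions of RCTC, labelled by finite sets of actions
(single-action transitions are labelled by singletons). -/
inductive FStep (E : Env) : Proc → Finset Act → Proc → Prop
  | act (l : Label) (m : ℕ) :
      FStep E (.act (.pre l)) {Act.pre l} (.act (.post l m))
  | tauAct :
      FStep E (.act .tau) {Act.tau} .nil
  | seqL {P P' Q : Proc} {X : Finset Act} :
      FStep E P X P' → Std Q → FStep E (.seq P Q) X (.seq P' Q)
  | seqR {P Q Q' : Proc} {X : Finset Act} :
      FStep E Q X Q' → NStd P → FStep E (.seq P Q) X (.seq P Q')
  | sumL {P P' Q : Proc} {X : Finset Act} :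
      FStep E P X P' → FStep E (.sum P Q) X (.sum P' Q)
  | sumR {P Q Q' : Proc} {X : Finset Act} :
      FStep E Q X Q' → FStep E (.sum P Q) X (.sum P Q')
  | parL {P P' Q : Proc} {X : Finset Act} :
      FStep E P X P' → FStep E (.par P Q) X (.par P' Q)
  | parR {P Q Q' : Proc} {X : Finset Act} :
      FStep E Q X Q' → FStep E (.par P Q) X (.par P Q')
  | parStep {P P' Q Q' : Proc} {X Y : Finset Act} :
      FStep E P X P' → FStep E Q Y Q' →
      (∀ a ∈ X, ∀ b ∈ Y, ∀ l : Label, a.label? = some l → b.label? ≠ some (Label.bar l)) →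
      FStep E (.par P Q) (X ∪ Y) (.par P' Q')
  | comm {P P' Q Q' : Proc} {l : Label} :
      FStep E P {Act.pre l} P' → FStep E Q {Act.pre (Label.bar l)} Q' →
      FStep E (.par P Q) {Act.tau} (.par P' Q')
  | res {P P' : Proc} {X : Finset Act} {L : Set Label} :
      FStep E P X P' →
      (∀ a ∈ X, ∀ l : Label, Act.label? a = some l → l ∉ L ∧ Label.bar l ∉ L) →
      FStep E (.restrict P L) X (.restrict P' L)
  | rel {P P' : Proc} {X : Finset Act} {f : Label → Label} :
      FStep E P X P' →
      FStep E (.relabel P f) (X.image (Act.rename f)) (.relabel P' f)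
  | defn {A : ℕ} {P' : Proc} {X : Finset Act} :
      FStep E (E.defs A) X P' → FStep E (.const A) X P'

/-- Reverse (step) transitions of RCTC, labelled by finite sets of past actions. -/
inductive RStep (E : Env) : Proc → Finset Act → Proc → Prop
  | act (l : Label) (m : ℕ) :
      RStep E (.act (.post l m)) {Act.post l m} (.act (.pre l))
  | tauAct :
      RStep E (.act .tau) {Act.tau} .nil
  | seqL {P P' Q : Proc} {X : Finset Act} :
      RStep E P X P' → Std Q → RStep E (.seq P Q) X (.seq P' Q)
  | seqR {P Q Q' : Proc} {X : Finset Act} :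
      RStep E Q X Q' → NStd P → RStep E (.seq P Q) X (.seq P Q')
  | sumL {P P' Q : Proc} {X : Finset Act} :
      RStep E P X P' → RStep E (.sum P Q) X (.sum P' Q)
  | sumR {P Q Q' : Proc} {X : Finset Act} :
      RStep E Q X Q' → RStep E (.sum P Q) X (.sum P Q')
  | parL {P P' Q : Proc} {X : Finset Act} :
      RStep E P X P' → RStep E (.par P Q) X (.par P' Q)
  | parR {P Q Q' : Proc} {X : Finset Act} :
      RStep E Q X Q' → RStep E (.par P Q) X (.par P Q')
  | parStep {P P' Q Q' : Proc} {X Y : Finset Act} :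
      RStep E P X P' → RStep E Q Y Q' →
      (∀ a ∈ X, ∀ b ∈ Y, ∀ l : Label, a.label? = some l → b.label? ≠ some (Label.bar l)) →
      RStep E (.par P Q) (X ∪ Y) (.par P' Q')
  | comm {P P' Q Q' : Proc} {l : Label} {m : ℕ} :
      RStep E P {Act.post l m} P' → RStep E Q {Act.post (Label.bar l) m} Q' →
      RStep E (.par P Q) {Act.tau} (.par P' Q')
  | res {P P' : Proc} {X : Finset Act} {L : Set Label} :
      RStep E P X P' →
      (∀ a ∈ X, ∀ l : Label, Act.label? a = some l → l ∉ L ∧ Label.bar l ∉ L) →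
      RStep E (.restrict P L) X (.restrict P' L)
  | rel {P P' : Proc} {X : Finset Act} {f : Label → Label} :
      RStep E P X P' →
      RStep E (.relabel P f) (X.image (Act.rename f)) (.relabel P' f)
  | defn {A : ℕ} {P' : Proc} {X : Finset Act} :
      RStep E (E.defs A) X P' → RStep E (.const A) X P'

/-- Forward pomset transitions: nonempty sequences of forward steps, labelled by the
list of steps performed (causal order in the pomset is reflected by the list order). -/
inductive FPom (E : Env) : Proc → List (Finset Act) → Proc → Prop
  | single {P P' : Proc} {X : Finset Act} : FStep E P X P' → FPom E P [X] P'
  | cons {P P₁ P' : Proc} {X : Finset Act} {Xs : List (Finset Act)} :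
      FStep E P X P₁ → FPom E P₁ Xs P' → FPom E P (X :: Xs) P'

/-- Reverse pomset transitions. -/
inductive RPom (E : Env) : Proc → List (Finset Act) → Proc → Prop
  | single {P P' : Proc} {X : Finset Act} : RStep E P X P' → RPom E P [X] P'
  | cons {P P₁ P' : Proc} {X : Finset Act} {Xs : List (Finset Act)} :
      RStep E P X P₁ → RPom E P₁ Xs P' → RPom E P (X :: Xs) P'

/-- Key-erasure on step labels. -/
def coreSet (X : Finset Act) : Finset Act := X.image Act.core

/-- Key-erasure on pomset labels. -/
def coreList (Xs : List (Finset Act)) : List (Finset Act) := Xs.map coreSet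

/-! ### Strongly forward-reverse step bisimulations -/

/-- `R` is a strongly FR step bisimulation. -/
def IsFRStepBisim (E : Env) (R : Proc → Proc → Prop) : Prop :=
  ∀ P Q, R P Q →
    ((∀ X P', FStep E P X P' → ∃ Q', FStep E Q X Q' ∧ R P' Q') ∧
     (∀ X Q', FStep E Q X Q' → ∃ P', FStep E P X P' ∧ R P' Q') ∧
     (∀ X P', RStep E P X P' → ∃ Y Q', RStep E Q Y Q' ∧ coreSet Y = coreSet X ∧ R P' Q') ∧
     (∀ Y Q', RStep E Q Y Q' → ∃ X P', RStep E P X P' ∧ coreSet X = coreSet Y ∧ R P' Q'))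

/-- `R` is a strongly forward step bisimulation (forward clauses only). -/
def IsFStepBisim (E : Env) (R : Proc → Proc → Prop) : Prop :=
  ∀ P Q, R P Q →
    ((∀ X P', FStep E P X P' → ∃ Q', FStep E Q X Q' ∧ R P' Q') ∧
     (∀ X Q', FStep E Q X Q' → ∃ P', FStep E P X P' ∧ R P' Q'))

/-- `R` is a strongly reverse step bisimulation (reverse clauses only). -/
def IsRStepBisim (E : Env) (R : Proc → Proc → Prop) : Prop :=
  ∀ P Q, R P Q →
    ((∀ X P', RStep E P X P' → ∃ Y Q', RStep E Q Y Q' ∧ coreSet Y = coreSet X ∧ R P' Q') ∧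
     (∀ Y Q', RStep E Q Y Q' → ∃ X P', RStep E P X P' ∧ coreSet X = coreSet Y ∧ R P' Q'))

/-- `P ∼ₛ^{fr} Q`. -/
def StepBisimFR (E : Env) (P Q : Proc) : Prop := ∃ R, IsFRStepBisim E R ∧ R P Q

/-- `P ∼ₛ^{f} Q`. -/
def StepBisimF (E : Env) (P Q : Proc) : Prop := ∃ R, IsFStepBisim E R ∧ R P Q

/-- `P ∼ₛ^{r} Q`. -/
def StepBisimR (E : Env) (P Q : Proc) : Prop := ∃ R, IsRStepBisim E R ∧ R P Q

/-! ### Strongly forward-reverse pomset bisimulations -/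

/-- `R` is a strongly FR pomset bisimulation. -/
def IsFRPomBisim (E : Env) (R : Proc → Proc → Prop) : Prop :=
  ∀ P Q, R P Q →
    ((∀ Xs P', FPom E P Xs P' → ∃ Q', FPom E Q Xs Q' ∧ R P' Q') ∧
     (∀ Xs Q', FPom E Q Xs Q' → ∃ P', FPom E P Xs P' ∧ R P' Q') ∧
     (∀ Xs P', RPom E P Xs P' → ∃ Ys Q', RPom E Q Ys Q' ∧ coreList Ys = coreList Xs ∧ R P' Q') ∧
     (∀ Ys Q', RPom E Q Ys Q' → ∃ Xs P', RPom E P Xs P' ∧ coreList Xs = coreList Ys ∧ R P' Q'))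

/-- `R` is a strongly forward pomset bisimulation. -/
def IsFPomBisim (E : Env) (R : Proc → Proc → Prop) : Prop :=
  ∀ P Q, R P Q →
    ((∀ Xs P', FPom E P Xs P' → ∃ Q', FPom E Q Xs Q' ∧ R P' Q') ∧
     (∀ Xs Q', FPom E Q Xs Q' → ∃ P', FPom E P Xs P' ∧ R P' Q'))

/-- `R` is a strongly reverse pomset bisimulation. -/
def IsRPomBisim (E : Env) (R : Proc → Proc → Prop) : Prop :=
  ∀ P Q, R P Q →
    ((∀ Xs P', RPom E P Xs P' → ∃ Ys Q', RPom E Q Ys Q' ∧ coreList Ys = coreList Xs ∧ R P' Q') ∧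
     (∀ Ys Q', RPom E Q Ys Q' → ∃ Xs P', RPom E P Xs P' ∧ coreList Xs = coreList Ys ∧ R P' Q'))

/-- `P ∼ₚ^{fr} Q`. -/
def PomBisimFR (E : Env) (P Q : Proc) : Prop := ∃ R, IsFRPomBisim E R ∧ R P Q

/-- `P ∼ₚ^{f} Q`. -/
def PomBisimF (E : Env) (P Q : Proc) : Prop := ∃ R, IsFPomBisim E R ∧ R P Q

/-- `P ∼ₚ^{r} Q`. -/
def PomBisimR (E : Env) (P Q : Proc) : Prop := ∃ R, IsRPomBisim E R ∧ R P Q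

/-! ### Strongly forward-reverse (hereditary) history-preserving bisimulations

Posetal triples `(C₁, f, C₂)` are modelled as a pair of processes together with the
history of matched events, i.e. the isomorphism `f` recorded as a list of pairs. -/

/-- `R` is a strongly FR history-preserving bisimulation. -/
def IsFRHpBisim (E : Env) (R : Proc → List (Act × Act) → Proc → Prop) : Prop :=
  ∀ P h Q, R P h Q →
    ((∀ (a : Act) (P' : Proc), FStep E P {a} P' →
        ∃ (b : Act) (Q' : Proc), FStep E Q {b} Q' ∧ b.core = a.core ∧ R P' (h ++ [(a, b)]) Q') ∧
     (∀ (b : Act) (Q' : Proc), FStep E Q {b} Q' →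
        ∃ (a : Act) (P' : Proc), FStep E P {a} P' ∧ a.core = b.core ∧ R P' (h ++ [(a, b)]) Q') ∧
     (∀ (a : Act) (P' : Proc), RStep E P {a} P' →
        ∃ (b : Act) (Q' : Proc), RStep E Q {b} Q' ∧ b.core = a.core ∧ R P' (h ++ [(a, b)]) Q') ∧
     (∀ (b : Act) (Q' : Proc), RStep E Q {b} Q' →
        ∃ (a : Act) (P' : Proc), RStep E P {a} P' ∧ a.core = b.core ∧ R P' (h ++ [(a, b)]) Q'))

/-- `R` is a strongly forward hp-bisimulation. -/
def IsFHpBisim (E : Env) (R : Proc → List (Act × Act) → Proc → Prop) : Prop :=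
  ∀ P h Q, R P h Q →
    ((∀ (a : Act) (P' : Proc), FStep E P {a} P' →
        ∃ (b : Act) (Q' : Proc), FStep E Q {b} Q' ∧ b.core = a.core ∧ R P' (h ++ [(a, b)]) Q') ∧
     (∀ (b : Act) (Q' : Proc), FStep E Q {b} Q' →
        ∃ (a : Act) (P' : Proc), FStep E P {a} P' ∧ a.core = b.core ∧ R P' (h ++ [(a, b)]) Q'))

/-- `R` is a strongly reverse hp-bisimulation. -/
def IsRHpBisim (E : Env) (R : Proc → List (Act × Act) → Proc → Prop) : Prop :=
  ∀ P h Q, R P h Q →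
    ((∀ (a : Act) (P' : Proc), RStep E P {a} P' →
        ∃ (b : Act) (Q' : Proc), RStep E Q {b} Q' ∧ b.core = a.core ∧ R P' (h ++ [(a, b)]) Q') ∧
     (∀ (b : Act) (Q' : Proc), RStep E Q {b} Q' →
        ∃ (a : Act) (P' : Proc), RStep E P {a} P' ∧ a.core = b.core ∧ R P' (h ++ [(a, b)]) Q'))

/-- Downward closure of a posetal relation (hereditary condition). -/
def DownwardClosed (R : Proc → List (Act × Act) → Proc → Prop) : Prop :=
  ∀ P h Q, R P h Q → ∀ h', h' <+: h → ∃ P₀ Q₀, R P₀ h' Q₀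

/-- `P ∼ₕₚ^{fr} Q`. -/
def HpBisimFR (E : Env) (P Q : Proc) : Prop := ∃ R, IsFRHpBisim E R ∧ R P [] Q

/-- `P ∼ₕₚ^{f} Q`. -/
def HpBisimF (E : Env) (P Q : Proc) : Prop := ∃ R, IsFHpBisim E R ∧ R P [] Q

/-- `P ∼ₕₚ^{r} Q`. -/
def HpBisimR (E : Env) (P Q : Proc) : Prop := ∃ R, IsRHpBisim E R ∧ R P [] Q

/-- `P ∼ₕₕₚ^{fr} Q`. -/
def HhpBisimFR (E : Env) (P Q : Proc) : Prop :=
  ∃ R, IsFRHpBisim E R ∧ DownwardClosed R ∧ R P [] Q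

/-- `P ∼ₕₕₚ^{f} Q`. -/
def HhpBisimF (E : Env) (P Q : Proc) : Prop :=
  ∃ R, IsFHpBisim E R ∧ DownwardClosed R ∧ R P [] Q

/-- `P ∼ₕₕₚ^{r} Q`. -/
def HhpBisimR (E : Env) (P Q : Proc) : Prop :=
  ∃ R, IsRHpBisim E R ∧ DownwardClosed R ∧ R P [] Q

/-! ### Weak transitions and weakly FR step bisimulations -/

/-- A forward silent move. -/
def TauF (E : Env) (P P' : Proc) : Prop := FStep E P {Act.tau} P'

/-- A reverse silent move. -/
def TauR (E : Env) (P P' : Proc) : Prop := RStep E P {Act.tau} P'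

/-- Weak forward step transition `P ⟹⟨X⟩ P'`. -/
def FWeak (E : Env) (P : Proc) (X : Finset Act) (P' : Proc) : Prop :=
  ∃ P₁ P₂, Relation.ReflTransGen (TauF E) P P₁ ∧ FStep E P₁ X P₂ ∧
    Relation.ReflTransGen (TauF E) P₂ P'

/-- Weak reverse step transition `P ⟾⟨X⟩ P'`. -/
def RWeak (E : Env) (P : Proc) (X : Finset Act) (P' : Proc) : Prop :=
  ∃ P₁ P₂, Relation.ReflTransGen (TauR E) P P₁ ∧ RStep E P₁ X P₂ ∧
    Relation.ReflTransGen (TauR E) P₂ P'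

/-- `R` is a weakly FR step bisimulation. -/
def IsWFRStepBisim (E : Env) (R : Proc → Proc → Prop) : Prop :=
  ∀ P Q, R P Q →
    ((∀ X P', Act.tau ∉ X → FWeak E P X P' → ∃ Q', FWeak E Q X Q' ∧ R P' Q') ∧
     (∀ X Q', Act.tau ∉ X → FWeak E Q X Q' → ∃ P', FWeak E P X P' ∧ R P' Q') ∧
     (∀ X P', Act.tau ∉ X → RWeak E P X P' →
        ∃ Y Q', RWeak E Q Y Q' ∧ coreSet Y = coreSet X ∧ R P' Q') ∧
     (∀ Y Q', Act.tau ∉ Y → RWeak E Q Y Q' →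
        ∃ X P', RWeak E P X P' ∧ coreSet X = coreSet Y ∧ R P' Q'))

/-- `R` is a weakly forward step bisimulation. -/
def IsWFStepBisim (E : Env) (R : Proc → Proc → Prop) : Prop :=
  ∀ P Q, R P Q →
    ((∀ X P', Act.tau ∉ X → FWeak E P X P' → ∃ Q', FWeak E Q X Q' ∧ R P' Q') ∧
     (∀ X Q', Act.tau ∉ X → FWeak E Q X Q' → ∃ P', FWeak E P X P' ∧ R P' Q'))

/-- `R` is a weakly reverse step bisimulation. -/
def IsWRStepBisim (E : Env) (R : Proc → Proc → Prop) : Prop :=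
  ∀ P Q, R P Q →
    ((∀ X P', Act.tau ∉ X → RWeak E P X P' →
        ∃ Y Q', RWeak E Q Y Q' ∧ coreSet Y = coreSet X ∧ R P' Q') ∧
     (∀ Y Q', Act.tau ∉ Y → RWeak E Q Y Q' →
        ∃ X P', RWeak E P X P' ∧ coreSet X = coreSet Y ∧ R P' Q'))

/-- `P ≈ₛ^{fr} Q`. -/
def WStepBisimFR (E : Env) (P Q : Proc) : Prop := ∃ R, IsWFRStepBisim E R ∧ R P Q

/-- `P ≈ₛ^{f} Q`. -/
def WStepBisimF (E : Env) (P Q : Proc) : Prop := ∃ R, IsWFStepBisim E R ∧ R P Q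

/-- `P ≈ₛ^{r} Q`. -/
def WStepBisimR (E : Env) (P Q : Proc) : Prop := ∃ R, IsWRStepBisim E R ∧ R P Q

section Expansion

variable {E : Env}

/-- Forward-dead processes. -/
def FDead (E : Env) (P : Proc) : Prop := ∀ X P', ¬ FStep E P X P'

/-- Reverse-dead processes. -/
def RDead (E : Env) (P : Proc) : Prop := ∀ X P', ¬ RStep E P X P'

lemma fdead_nil : FDead E .nil := fun _ _ h => by cases h

lemma fdead_post (l : Label) (m : ℕ) : FDead E (.act (.post l m)) := fun _ _ h => by cases h

lemma rdead_nil : RDead E .nil := fun _ _ h => by cases h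

lemma rdead_pre (l : Label) : RDead E (.act (.pre l)) := fun _ _ h => by cases h

lemma fdead_par {P Q : Proc} (hP : FDead E P) (hQ : FDead E Q) : FDead E (.par P Q) := by
  intro X R h
  cases h with
  | parL h => exact hP _ _ h
  | parR h => exact hQ _ _ h
  | parStep h1 h2 _ => exact hP _ _ h1
  | comm h1 h2 => exact hP _ _ h1

lemma rdead_par {P Q : Proc} (hP : RDead E P) (hQ : RDead E Q) : RDead E (.par P Q) := by
  intro X R h
  cases h with
  | parL h => exact hP _ _ h
  | parR h => exact hQ _ _ h
  | parStep h1 h2 _ => exact hP _ _ h1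
  | comm h1 h2 => exact hP _ _ h1

lemma fstep_pre_inv {l : Label} {Y : Finset Act} {Q' : Proc}
    (h : FStep E (.act (.pre l)) Y Q') :
    Y = {Act.pre l} ∧ ∃ m, Q' = .act (.post l m) := by
  cases h with
  | act _ m => exact ⟨rfl, m, rfl⟩

lemma fstep_tau_inv {Y : Finset Act} {Q' : Proc}
    (h : FStep E (.act .tau) Y Q') : Y = {Act.tau} ∧ Q' = .nil := by
  cases h with
  | tauAct => exact ⟨rfl, rfl⟩

lemma rstep_post_inv {l : Label} {m : ℕ} {Y : Finset Act} {Q' : Proc}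
    (h : RStep E (.act (.post l m)) Y Q') :
    Y = {Act.post l m} ∧ Q' = .act (.pre l) := by
  cases h with
  | act => exact ⟨rfl, rfl⟩

lemma rstep_tau_inv {Y : Finset Act} {Q' : Proc}
    (h : RStep E (.act .tau) Y Q') : Y = {Act.tau} ∧ Q' = .nil := by
  cases h with
  | tauAct => exact ⟨rfl, rfl⟩

lemma core_eq_of_coreSet {x y : Act} (h : coreSet {x} = coreSet {y}) : x.core = y.core := by
  simpa [coreSet] using h

lemma bar_ne (l : Label) : Label.bar l ≠ l := by
  simp [Label.bar, Prod.ext_iff]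

lemma side_pre (l : Label) :
    ∀ x ∈ ({Act.pre l} : Finset Act), ∀ y ∈ ({Act.pre l} : Finset Act),
      ∀ k : Label, x.label? = some k → y.label? ≠ some (Label.bar k) := by
  intro x hx y hy k hk hk2
  simp only [Finset.mem_singleton] at hx hy
  subst hx; subst hy
  simp only [Act.label?, Option.some.injEq] at hk hk2
  subst hk
  exact bar_ne _ hk2.symm

lemma side_tau :
    ∀ x ∈ ({Act.tau} : Finset Act), ∀ y ∈ ({Act.tau} : Finset Act),
      ∀ k : Label, x.label? = some k → y.label? ≠ some (Label.bar k) := by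
  intro x hx y hy k hk
  simp only [Finset.mem_singleton] at hx hy
  subst hx
  simp [Act.label?] at hk

/-- The common "duplicator" interface extracted from all the strong FR bisimilarities. -/
def Dup (E : Env) (R : Proc → Proc → Prop) : Prop :=
  ∀ P Q, R P Q →
    ((∀ x P', FStep E P {x} P' →
        ∃ Y Q', FStep E Q Y Q' ∧ coreSet Y = coreSet {x} ∧ R P' Q') ∧
     (∀ y Q', FStep E Q {y} Q' → ∃ X P', FStep E P X P') ∧
     (∀ x P', RStep E P {x} P' →
        ∃ Y Q', RStep E Q Y Q' ∧ coreSet Y = coreSet {x} ∧ R P' Q') ∧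
     (∀ y Q', RStep E Q {y} Q' → ∃ X P', RStep E P X P'))

end Expansion
section Expansion2

variable {E : Env}

/-- Case A-eq : `a ∥ a` vs `a.a + a.a` for a forward-capable action `a`. -/
lemma caseA_eq (a : Act) (R : Proc → Proc → Prop) (hDup : Dup E R)
    (Sa : Proc) (ha : FStep E (.act a) {a} Sa) (hSdead : FDead E Sa)
    (hstd : Std (.act a)) (hnstd : ¬ NStd (.act a))
    (hside : ∀ x ∈ ({a} : Finset Act), ∀ y ∈ ({a} : Finset Act),
        ∀ k : Label, x.label? = some k → y.label? ≠ some (Label.bar k))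
    (h0 : R (.par (.act a) (.act a))
            (.sum (.seq (.act a) (.act a)) (.seq (.act a) (.act a)))) : False := by
  have hstep : FStep E (.par (.act a) (.act a)) {a} (.par Sa Sa) := by
    have h := FStep.parStep ha ha hside
    rwa [Finset.union_self] at h
  obtain ⟨Y, Q', hQ, hcore, hR⟩ := (hDup _ _ h0).1 a _ hstep
  have hdead : FDead E (.par Sa Sa) := fdead_par hSdead hSdead
  cases hQ with
  | sumL h =>
    cases h with
    | seqL h1 h2 =>
      obtain ⟨_, P', hlive⟩ := (hDup _ _ hR).2.1 a _ (FStep.sumR (FStep.seqL ha hstd))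
      exact hdead _ _ hlive
    | seqR h1 h2 => exact hnstd h2
  | sumR h =>
    cases h with
    | seqL h1 h2 =>
      obtain ⟨_, P', hlive⟩ := (hDup _ _ hR).2.1 a _ (FStep.sumL (FStep.seqL ha hstd))
      exact hdead _ _ hlive
    | seqR h1 h2 => exact hnstd h2

/-- Case A-neq : `a ∥ b` for forward-capable `a ≠ b` (distinct cores). -/
lemma caseA_neq (a b : Act) (R : Proc → Proc → Prop) (hDup : Dup E R)
    (Sa Sb : Proc) (ha : FStep E (.act a) {a} Sa) (hb : FStep E (.act b) {b} Sb)
    (hSa : FDead E Sa) (hSb : FDead E Sb)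
    (hinva : ∀ Y Q', FStep E (.act a) Y Q' → Y = {a} ∧ FDead E Q' ∧ NStd Q')
    (hinvb : ∀ Y Q', FStep E (.act b) Y Q' → Y = {b} ∧ FDead E Q' ∧ NStd Q')
    (hstda : Std (.act a)) (hstdb : Std (.act b))
    (hnstda : ¬ NStd (.act a)) (hnstdb : ¬ NStd (.act b))
    (hcore : a.core ≠ b.core)
    (h0 : R (.par (.act a) (.act b))
            (.sum (.seq (.act a) (.act b)) (.seq (.act b) (.act a)))) : False := by
  -- move 1 : forward a on the left component
  obtain ⟨Y, Q1, hQ1, hcore1, hR1⟩ := (hDup _ _ h0).1 a _ (FStep.parL ha)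
  cases hQ1 with
  | sumL h =>
    cases h with
    | seqL h1 h2 =>
      obtain ⟨hY, hCd, hCn⟩ := hinva _ _ h1
      -- move 2 : forward b on the right component
      obtain ⟨Z, Q2, hQ2, hcore2, hR2⟩ := (hDup _ _ hR1).1 b _ (FStep.parR hb)
      have hdead : FDead E (.par Sa Sb) := fdead_par hSa hSb
      cases hQ2 with
      | sumL h' =>
        cases h' with
        | seqL h1' h2' => exact hCd _ _ h1'
        | seqR h1' h2' =>
          obtain ⟨_, P', hlive⟩ := (hDup _ _ hR2).2.1 b _ (FStep.sumR (FStep.seqL hb hstda))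
          exact hdead _ _ hlive
      | sumR h' =>
        cases h' with
        | seqL h1' h2' =>
          obtain ⟨_, _, _⟩ := hinvb _ _ h1'
          obtain ⟨_, P', hlive⟩ := (hDup _ _ hR2).2.1 b _ (FStep.sumL (FStep.seqR hb hCn))
          exact hdead _ _ hlive
        | seqR h1' h2' => exact hnstdb h2'
    | seqR h1 h2 => exact hnstda h2
  | sumR h =>
    cases h with
    | seqL h1 h2 =>
      obtain ⟨hY, _, _⟩ := hinvb _ _ h1
      subst hY
      exact hcore (core_eq_of_coreSet hcore1).symm
    | seqR h1 h2 => exact hnstdb h2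

end Expansion2
section Expansion3

variable {E : Env}

/-- Case B-i : `l[m] ∥ l` (past action against its own label). -/
lemma caseB_eq (l : Label) (m : ℕ) (R : Proc → Proc → Prop) (hDup : Dup E R)
    (h0 : R (.par (.act (.post l m)) (.act (.pre l)))
            (.sum (.seq (.act (.post l m)) (.act (.pre l)))
                  (.seq (.act (.pre l)) (.act (.post l m))))) : False := by
  -- move 1 : reverse the past action on the left
  obtain ⟨Y, Q1, hQ1, hc1, hR1⟩ :=
    (hDup _ _ h0).2.2.1 _ _ (RStep.parL (RStep.act l m))
  cases hQ1 with
  | sumL h =>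
    cases h with
    | seqL h1 h2 =>
      obtain ⟨hY, hC⟩ := rstep_post_inv h1
      subst hC
      -- move 2 : simultaneous forward step, collapsing to a singleton label
      have hstep : FStep E (.par (.act (.pre l)) (.act (.pre l))) {Act.pre l}
          (.par (.act (.post l 0)) (.act (.post l 0))) := by
        have h := FStep.parStep (E := E) (FStep.act l 0) (FStep.act l 0) (side_pre l)
        rwa [Finset.union_self] at h
      obtain ⟨Z, Q2, hQ2, hc2, hR2⟩ := (hDup _ _ hR1).1 _ _ hstep
      have hdead : FDead E (.par (.act (.post l 0)) (.act (.post l 0))) :=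
        fdead_par (fdead_post l 0) (fdead_post l 0)
      cases hQ2 with
      | sumL h' =>
        cases h' with
        | seqL h1' h2' =>
          obtain ⟨hZ, k, hC'⟩ := fstep_pre_inv h1'
          subst hC'
          obtain ⟨_, P', hlive⟩ := (hDup _ _ hR2).2.1 _ _
            (FStep.sumL (FStep.seqR (FStep.act l 0) (by trivial)))
          exact hdead _ _ hlive
        | seqR h1' h2' => exact h2'
      | sumR h' =>
        cases h' with
        | seqL h1' h2' => exact h2'
        | seqR h1' h2' => exact h2'
    | seqR h1 h2 => cases h1
  | sumR h =>
    cases h with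
    | seqL h1 h2 => exact h2
    | seqR h1 h2 => exact h2

/-- Case B-ii : `l[m] ∥ l'` with `l ≠ l'`. -/
lemma caseB_neq (l l' : Label) (m : ℕ) (hl : l ≠ l') (R : Proc → Proc → Prop) (hDup : Dup E R)
    (h0 : R (.par (.act (.post l m)) (.act (.pre l')))
            (.sum (.seq (.act (.post l m)) (.act (.pre l')))
                  (.seq (.act (.pre l')) (.act (.post l m))))) : False := by
  obtain ⟨Y, Q1, hQ1, hc1, hR1⟩ :=
    (hDup _ _ h0).2.2.1 _ _ (RStep.parL (RStep.act l m))
  cases hQ1 with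
  | sumL h =>
    cases h with
    | seqL h1 h2 =>
      obtain ⟨hY, hC⟩ := rstep_post_inv h1
      subst hC
      -- move 2 : forward l on the left component
      obtain ⟨Z, Q2, hQ2, hc2, hR2⟩ := (hDup _ _ hR1).1 _ _ (FStep.parL (FStep.act l 0))
      cases hQ2 with
      | sumL h' =>
        cases h' with
        | seqL h1' h2' =>
          obtain ⟨hZ, k, hC'⟩ := fstep_pre_inv h1'
          subst hC'
          -- move 3 : forward l' on the right component
          obtain ⟨W, Q3, hQ3, hc3, hR3⟩ := (hDup _ _ hR2).1 _ _ (FStep.parR (FStep.act l' 0))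
          cases hQ3 with
          | sumL h'' =>
            cases h'' with
            | seqL h1'' h2'' => cases h1''
            | seqR h1'' h2'' =>
              obtain ⟨hW, k', hC''⟩ := fstep_pre_inv h1''
              subst hC''
              -- move 4 : reverse the l-past action on the left — no answer
              obtain ⟨V, Q4, hQ4, hc4, hR4⟩ :=
                (hDup _ _ hR3).2.2.1 _ _ (RStep.parL (RStep.act l 0))
              cases hQ4 with
              | sumL h''' =>
                cases h''' with
                | seqL h1''' h2''' => exact h2'''
                | seqR h1''' h2''' =>
                  obtain ⟨hV, hD⟩ := rstep_post_inv h1'''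
                  subst hV
                  have := core_eq_of_coreSet hc4
                  simp only [Act.core, Act.pre.injEq] at this
                  exact hl this.symm
              | sumR h''' =>
                cases h''' with
                | seqL h1''' h2''' => exact h2'''
                | seqR h1''' h2''' => exact h2'''
          | sumR h'' =>
            cases h'' with
            | seqL h1'' h2'' => exact h2''
            | seqR h1'' h2'' => exact h2''
        | seqR h1' h2' => exact h2'
      | sumR h' =>
        cases h' with
        | seqL h1' h2' => exact h2'
        | seqR h1' h2' => exact h2'
    | seqR h1 h2 => cases h1
  | sumR h =>
    cases h with
    | seqL h1 h2 => exact h2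
    | seqR h1 h2 => exact h2

/-- Case B-iii : `l[m] ∥ τ`. -/
lemma caseB_tau (l : Label) (m : ℕ) (R : Proc → Proc → Prop) (hDup : Dup E R)
    (h0 : R (.par (.act (.post l m)) (.act .tau))
            (.sum (.seq (.act (.post l m)) (.act .tau))
                  (.seq (.act .tau) (.act (.post l m))))) : False := by
  obtain ⟨Y, Q1, hQ1, hc1, hR1⟩ :=
    (hDup _ _ h0).2.2.1 _ _ (RStep.parL (RStep.act l m))
  cases hQ1 with
  | sumL h =>
    cases h with
    | seqL h1 h2 =>
      obtain ⟨hY, hC⟩ := rstep_post_inv h1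
      subst hC
      -- move 2 : forward τ on the right — no answer
      obtain ⟨Z, Q2, hQ2, hc2, hR2⟩ := (hDup _ _ hR1).1 _ _ (FStep.parR FStep.tauAct)
      cases hQ2 with
      | sumL h' =>
        cases h' with
        | seqL h1' h2' =>
          obtain ⟨hZ, k, hC'⟩ := fstep_pre_inv h1'
          subst hZ
          have := core_eq_of_coreSet hc2
          simp [Act.core] at this
        | seqR h1' h2' => exact h2'
      | sumR h' =>
        cases h' with
        | seqL h1' h2' => exact h2'
        | seqR h1' h2' => exact h2'
    | seqR h1 h2 =>
      obtain ⟨hY, hC⟩ := rstep_tau_inv h1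
      subst hY
      have := core_eq_of_coreSet hc1
      simp [Act.core] at this
  | sumR h =>
    cases h with
    | seqL h1 h2 => exact h2
    | seqR h1 h2 => exact h2

end Expansion3
section Expansion4

variable {E : Env}

/-- Case B'-i : `l ∥ l[m']`. -/
lemma caseBp_eq (l : Label) (m' : ℕ) (R : Proc → Proc → Prop) (hDup : Dup E R)
    (h0 : R (.par (.act (.pre l)) (.act (.post l m')))
            (.sum (.seq (.act (.pre l)) (.act (.post l m')))
                  (.seq (.act (.post l m')) (.act (.pre l))))) : False := by
  obtain ⟨Y, Q1, hQ1, hc1, hR1⟩ :=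
    (hDup _ _ h0).2.2.1 _ _ (RStep.parR (RStep.act l m'))
  cases hQ1 with
  | sumL h =>
    cases h with
    | seqL h1 h2 => exact h2
    | seqR h1 h2 => exact h2
  | sumR h =>
    cases h with
    | seqL h1 h2 =>
      obtain ⟨hY, hC⟩ := rstep_post_inv h1
      subst hC
      have hstep : FStep E (.par (.act (.pre l)) (.act (.pre l))) {Act.pre l}
          (.par (.act (.post l 0)) (.act (.post l 0))) := by
        have h := FStep.parStep (E := E) (FStep.act l 0) (FStep.act l 0) (side_pre l)
        rwa [Finset.union_self] at h
      obtain ⟨Z, Q2, hQ2, hc2, hR2⟩ := (hDup _ _ hR1).1 _ _ hstep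
      have hdead : FDead E (.par (.act (.post l 0)) (.act (.post l 0))) :=
        fdead_par (fdead_post l 0) (fdead_post l 0)
      cases hQ2 with
      | sumL h' =>
        cases h' with
        | seqL h1' h2' => exact h2'
        | seqR h1' h2' => exact h2'
      | sumR h' =>
        cases h' with
        | seqL h1' h2' =>
          obtain ⟨hZ, k, hC'⟩ := fstep_pre_inv h1'
          subst hC'
          obtain ⟨_, P', hlive⟩ := (hDup _ _ hR2).2.1 _ _
            (FStep.sumR (FStep.seqR (FStep.act l 0) (by trivial)))
          exact hdead _ _ hlive
        | seqR h1' h2' => exact h2'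
    | seqR h1 h2 => cases h1

/-- Case B'-ii : `l ∥ l'[m']` with `l ≠ l'`. -/
lemma caseBp_neq (l l' : Label) (m' : ℕ) (hl : l ≠ l') (R : Proc → Proc → Prop) (hDup : Dup E R)
    (h0 : R (.par (.act (.pre l)) (.act (.post l' m')))
            (.sum (.seq (.act (.pre l)) (.act (.post l' m')))
                  (.seq (.act (.post l' m')) (.act (.pre l))))) : False := by
  obtain ⟨Y, Q1, hQ1, hc1, hR1⟩ :=
    (hDup _ _ h0).2.2.1 _ _ (RStep.parR (RStep.act l' m'))
  cases hQ1 with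
  | sumL h =>
    cases h with
    | seqL h1 h2 => exact h2
    | seqR h1 h2 => exact h2
  | sumR h =>
    cases h with
    | seqL h1 h2 =>
      obtain ⟨hY, hC⟩ := rstep_post_inv h1
      subst hC
      -- move 2 : forward l' on the right component
      obtain ⟨Z, Q2, hQ2, hc2, hR2⟩ := (hDup _ _ hR1).1 _ _ (FStep.parR (FStep.act l' 0))
      cases hQ2 with
      | sumL h' =>
        cases h' with
        | seqL h1' h2' => exact h2'
        | seqR h1' h2' => exact h2'
      | sumR h' =>
        cases h' with
        | seqL h1' h2' =>
          obtain ⟨hZ, k, hC'⟩ := fstep_pre_inv h1'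
          subst hC'
          -- move 3 : forward l on the left component
          obtain ⟨W, Q3, hQ3, hc3, hR3⟩ := (hDup _ _ hR2).1 _ _ (FStep.parL (FStep.act l 0))
          cases hQ3 with
          | sumL h'' =>
            cases h'' with
            | seqL h1'' h2'' => exact h2''
            | seqR h1'' h2'' => exact h2''
          | sumR h'' =>
            cases h'' with
            | seqL h1'' h2'' => cases h1''
            | seqR h1'' h2'' =>
              obtain ⟨hW, k', hC''⟩ := fstep_pre_inv h1''
              subst hC''
              -- move 4 : reverse the l'-past action on the right — no answer
              obtain ⟨V, Q4, hQ4, hc4, hR4⟩ :=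
                (hDup _ _ hR3).2.2.1 _ _ (RStep.parR (RStep.act l' 0))
              cases hQ4 with
              | sumL h''' =>
                cases h''' with
                | seqL h1''' h2''' => exact h2'''
                | seqR h1''' h2''' => exact h2'''
              | sumR h''' =>
                cases h''' with
                | seqL h1''' h2''' => exact h2'''
                | seqR h1''' h2''' =>
                  obtain ⟨hV, hD⟩ := rstep_post_inv h1'''
                  subst hV
                  have := core_eq_of_coreSet hc4
                  simp only [Act.core, Act.pre.injEq] at this
                  exact hl this
        | seqR h1' h2' => exact h2'
    | seqR h1 h2 => cases h1

/-- Case B'-iii : `τ ∥ l'[m']`. -/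
lemma caseBp_tau (l' : Label) (m' : ℕ) (R : Proc → Proc → Prop) (hDup : Dup E R)
    (h0 : R (.par (.act .tau) (.act (.post l' m')))
            (.sum (.seq (.act .tau) (.act (.post l' m')))
                  (.seq (.act (.post l' m')) (.act .tau)))) : False := by
  obtain ⟨Y, Q1, hQ1, hc1, hR1⟩ :=
    (hDup _ _ h0).2.2.1 _ _ (RStep.parR (RStep.act l' m'))
  cases hQ1 with
  | sumL h =>
    cases h with
    | seqL h1 h2 => exact h2
    | seqR h1 h2 => exact h2
  | sumR h =>
    cases h with
    | seqL h1 h2 =>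
      obtain ⟨hY, hC⟩ := rstep_post_inv h1
      subst hC
      -- move 2 : forward τ on the left — no answer
      obtain ⟨Z, Q2, hQ2, hc2, hR2⟩ := (hDup _ _ hR1).1 _ _ (FStep.parL FStep.tauAct)
      cases hQ2 with
      | sumL h' =>
        cases h' with
        | seqL h1' h2' => exact h2'
        | seqR h1' h2' => exact h2'
      | sumR h' =>
        cases h' with
        | seqL h1' h2' =>
          obtain ⟨hZ, k, hC'⟩ := fstep_pre_inv h1'
          subst hZ
          have := core_eq_of_coreSet hc2
          simp [Act.core] at this
        | seqR h1' h2' => exact h2'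
    | seqR h1 h2 =>
      obtain ⟨hY, hC⟩ := rstep_tau_inv h1
      subst hY
      have := core_eq_of_coreSet hc1
      simp [Act.core] at this

/-- Case C-i : `l[m] ∥ l'[m']` with `l ≠ l'`. -/
lemma caseC_neq (l l' : Label) (m m' : ℕ) (hl : l ≠ l') (R : Proc → Proc → Prop)
    (hDup : Dup E R)
    (h0 : R (.par (.act (.post l m)) (.act (.post l' m')))
            (.sum (.seq (.act (.post l m)) (.act (.post l' m')))
                  (.seq (.act (.post l' m')) (.act (.post l m))))) : False := by
  -- move 1 : reverse l[m] on the left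
  obtain ⟨Y, Q1, hQ1, hc1, hR1⟩ :=
    (hDup _ _ h0).2.2.1 _ _ (RStep.parL (RStep.act l m))
  cases hQ1 with
  | sumL h =>
    cases h with
    | seqL h1 h2 => exact h2
    | seqR h1 h2 =>
      obtain ⟨hY, hC⟩ := rstep_post_inv h1
      subst hY
      have := core_eq_of_coreSet hc1
      simp only [Act.core, Act.pre.injEq] at this
      exact hl this.symm
  | sumR h =>
    cases h with
    | seqL h1 h2 => exact h2
    | seqR h1 h2 =>
      obtain ⟨hY, hC⟩ := rstep_post_inv h1
      subst hC
      -- move 2 : reverse l'[m'] on the right; the answers leave a reverse-live sum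
      obtain ⟨Z, Q2, hQ2, hc2, hR2⟩ :=
        (hDup _ _ hR1).2.2.1 _ _ (RStep.parR (RStep.act l' m'))
      have hdead : RDead E (.par (.act (.pre l)) (.act (.pre l'))) :=
        rdead_par (rdead_pre l) (rdead_pre l')
      cases hQ2 with
      | sumL h' =>
        cases h' with
        | seqL h1' h2' => exact h2'
        | seqR h1' h2' =>
          obtain ⟨hZ, hC'⟩ := rstep_post_inv h1'
          subst hC'
          obtain ⟨_, P', hlive⟩ := (hDup _ _ hR2).2.2.2 _ _
            (RStep.sumL (RStep.seqL (RStep.act l m) (by trivial)))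
          exact hdead _ _ hlive
      | sumR h' =>
        cases h' with
        | seqL h1' h2' =>
          obtain ⟨hZ, hC'⟩ := rstep_post_inv h1'
          subst hC'
          obtain ⟨_, P', hlive⟩ := (hDup _ _ hR2).2.2.2 _ _
            (RStep.sumL (RStep.seqR (RStep.act l' m') (by trivial)))
          exact hdead _ _ hlive
        | seqR h1' h2' => cases h1'

/-- Case C-ii : `l[m] ∥ l[m']`. -/
lemma caseC_eq (l : Label) (m m' : ℕ) (R : Proc → Proc → Prop) (hDup : Dup E R)
    (h0 : R (.par (.act (.post l m)) (.act (.post l m')))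
            (.sum (.seq (.act (.post l m)) (.act (.post l m')))
                  (.seq (.act (.post l m')) (.act (.post l m))))) : False := by
  obtain ⟨Y, Q1, hQ1, hc1, hR1⟩ :=
    (hDup _ _ h0).2.2.1 _ _ (RStep.parL (RStep.act l m))
  have hdead : RDead E (.par (.act (.pre l)) (.act (.pre l))) :=
    rdead_par (rdead_pre l) (rdead_pre l)
  cases hQ1 with
  | sumL h =>
    cases h with
    | seqL h1 h2 => exact h2
    | seqR h1 h2 =>
      obtain ⟨hY, hC⟩ := rstep_post_inv h1
      subst hC
      -- Q1a = sum (seq l[m] l) (seq l[m'] l[m])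
      obtain ⟨Z, Q2, hQ2, hc2, hR2⟩ :=
        (hDup _ _ hR1).2.2.1 _ _ (RStep.parR (RStep.act l m'))
      cases hQ2 with
      | sumL h' =>
        cases h' with
        | seqL h1' h2' =>
          obtain ⟨hZ, hC'⟩ := rstep_post_inv h1'
          subst hC'
          obtain ⟨_, P', hlive⟩ := (hDup _ _ hR2).2.2.2 _ _
            (RStep.sumR (RStep.seqR (RStep.act l m) (by trivial)))
          exact hdead _ _ hlive
        | seqR h1' h2' => cases h1'
      | sumR h' =>
        cases h' with
        | seqL h1' h2' => exact h2'
        | seqR h1' h2' =>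
          obtain ⟨hZ, hC'⟩ := rstep_post_inv h1'
          subst hC'
          obtain ⟨_, P', hlive⟩ := (hDup _ _ hR2).2.2.2 _ _
            (RStep.sumL (RStep.seqL (RStep.act l m) (by trivial)))
          exact hdead _ _ hlive
  | sumR h =>
    cases h with
    | seqL h1 h2 => exact h2
    | seqR h1 h2 =>
      obtain ⟨hY, hC⟩ := rstep_post_inv h1
      subst hC
      -- Q1b = sum (seq l[m] l[m']) (seq l[m'] l)
      obtain ⟨Z, Q2, hQ2, hc2, hR2⟩ :=
        (hDup _ _ hR1).2.2.1 _ _ (RStep.parR (RStep.act l m'))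
      cases hQ2 with
      | sumL h' =>
        cases h' with
        | seqL h1' h2' => exact h2'
        | seqR h1' h2' =>
          obtain ⟨hZ, hC'⟩ := rstep_post_inv h1'
          subst hC'
          obtain ⟨_, P', hlive⟩ := (hDup _ _ hR2).2.2.2 _ _
            (RStep.sumL (RStep.seqL (RStep.act l m) (by trivial)))
          exact hdead _ _ hlive
      | sumR h' =>
        cases h' with
        | seqL h1' h2' =>
          obtain ⟨hZ, hC'⟩ := rstep_post_inv h1'
          subst hC'
          obtain ⟨_, P', hlive⟩ := (hDup _ _ hR2).2.2.2 _ _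
            (RStep.sumL (RStep.seqR (RStep.act l m') (by trivial)))
          exact hdead _ _ hlive
        | seqR h1' h2' => cases h1'

end Expansion4
section Expansion5

/-- The central lemma: no relation satisfying the duplicator interface can relate
`a ∥ b` with `a.b + b.a`. -/
lemma expansion_game (E : Env) (a b : Act) (R : Proc → Proc → Prop) (hDup : Dup E R)
    (h0 : R (.par (.act a) (.act b))
            (.sum (.seq (.act a) (.act b)) (.seq (.act b) (.act a)))) : False := by
  have hinv_pre : ∀ l : Label, ∀ Y Q', FStep E (.act (.pre l)) Y Q' →
      Y = {Act.pre l} ∧ FDead E Q' ∧ NStd Q' := by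
    intro l Y Q' h
    obtain ⟨hY, m, hQ⟩ := fstep_pre_inv h
    subst hQ
    exact ⟨hY, fdead_post l m, trivial⟩
  have hinv_tau : ∀ Y Q', FStep E (.act .tau) Y Q' →
      Y = {Act.tau} ∧ FDead E Q' ∧ NStd Q' := by
    intro Y Q' h
    obtain ⟨hY, hQ⟩ := fstep_tau_inv h
    subst hQ
    exact ⟨hY, fdead_nil, trivial⟩
  cases a with
  | pre l =>
    cases b with
    | pre l' =>
      by_cases hl : l = l'
      · subst hl
        exact caseA_eq (Act.pre l) R hDup _ (FStep.act l 0) (fdead_post l 0)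
          trivial (fun h => h) (side_pre l) h0
      · refine caseA_neq (Act.pre l) (Act.pre l') R hDup _ _ (FStep.act l 0) (FStep.act l' 0)
          (fdead_post l 0) (fdead_post l' 0) (hinv_pre l) (hinv_pre l')
          trivial trivial (fun h => h) (fun h => h) ?_ h0
        simpa [Act.core] using hl
    | tau =>
      exact caseA_neq (Act.pre l) Act.tau R hDup _ _ (FStep.act l 0) FStep.tauAct
        (fdead_post l 0) fdead_nil (hinv_pre l) hinv_tau trivial trivial
        (fun h => h) (fun h => h) (by simp [Act.core]) h0
    | post l' m' =>
      by_cases hl : l = l'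
      · subst hl; exact caseBp_eq l m' R hDup h0
      · exact caseBp_neq l l' m' hl R hDup h0
  | tau =>
    cases b with
    | pre l' =>
      exact caseA_neq Act.tau (Act.pre l') R hDup _ _ FStep.tauAct (FStep.act l' 0)
        fdead_nil (fdead_post l' 0) hinv_tau (hinv_pre l') trivial trivial
        (fun h => h) (fun h => h) (by simp [Act.core]) h0
    | tau =>
      exact caseA_eq Act.tau R hDup _ FStep.tauAct fdead_nil trivial (fun h => h) side_tau h0
    | post l' m' => exact caseBp_tau l' m' R hDup h0
  | post l m =>
    cases b with
    | pre l' =>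
      by_cases hl : l = l'
      · subst hl; exact caseB_eq l m R hDup h0
      · exact caseB_neq l l' m hl R hDup h0
    | tau => exact caseB_tau l m R hDup h0
    | post l' m' =>
      by_cases hl : l = l'
      · subst hl; exact caseC_eq l m m' R hDup h0
      · exact caseC_neq l l' m m' hl R hDup h0

end Expansion5
section Expansion6

variable {E : Env}

lemma fpom_nil {P P' : Proc} (h : FPom E P [] P') : False := by cases h

lemma rpom_nil {P P' : Proc} (h : RPom E P [] P') : False := by cases h

lemma fpom_singleton {P P' : Proc} {X : Finset Act} (h : FPom E P [X] P') :
    FStep E P X P' := by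
  cases h with
  | single h => exact h
  | cons h1 h2 => exact absurd h2 (fun h => fpom_nil h)

lemma rpom_singleton {P P' : Proc} {X : Finset Act} (h : RPom E P [X] P') :
    RStep E P X P' := by
  cases h with
  | single h => exact h
  | cons h1 h2 => exact absurd h2 (fun h => rpom_nil h)

lemma dup_of_step {R : Proc → Proc → Prop} (h : IsFRStepBisim E R) : Dup E R := by
  intro P Q hR
  obtain ⟨c1, c2, c3, c4⟩ := h P Q hR
  refine ⟨?_, ?_, ?_, ?_⟩
  · intro x P' hs
    obtain ⟨Q', h1, h2⟩ := c1 {x} P' hs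
    exact ⟨{x}, Q', h1, rfl, h2⟩
  · intro y Q' hs
    obtain ⟨P', h1, _⟩ := c2 {y} Q' hs
    exact ⟨{y}, P', h1⟩
  · intro x P' hs
    exact c3 {x} P' hs
  · intro y Q' hs
    obtain ⟨X, P', h1, _, _⟩ := c4 {y} Q' hs
    exact ⟨X, P', h1⟩

lemma dup_of_pom {R : Proc → Proc → Prop} (h : IsFRPomBisim E R) : Dup E R := by
  intro P Q hR
  obtain ⟨c1, c2, c3, c4⟩ := h P Q hR
  refine ⟨?_, ?_, ?_, ?_⟩
  · intro x P' hs
    obtain ⟨Q', h1, h2⟩ := c1 [{x}] P' (FPom.single hs)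
    exact ⟨{x}, Q', fpom_singleton h1, rfl, h2⟩
  · intro y Q' hs
    obtain ⟨P', h1, _⟩ := c2 [{y}] Q' (FPom.single hs)
    exact ⟨{y}, P', fpom_singleton h1⟩
  · intro x P' hs
    obtain ⟨Ys, Q', h1, h2, h3⟩ := c3 [{x}] P' (RPom.single hs)
    match Ys, h1, h2 with
    | [Y], h1, h2 =>
      refine ⟨Y, Q', rpom_singleton h1, ?_, h3⟩
      simpa [coreList] using h2
    | [], h1, _ => exact absurd h1 (fun h => rpom_nil h)
    | (Y :: Y' :: Ys), _, h2 => simp [coreList] at h2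
  · intro y Q' hs
    obtain ⟨Xs, P', h1, h2, _⟩ := c4 [{y}] Q' (RPom.single hs)
    match Xs, h1, h2 with
    | [X], h1, _ => exact ⟨X, P', rpom_singleton h1⟩
    | [], h1, _ => exact absurd h1 (fun h => rpom_nil h)
    | (X :: X' :: Xs), _, h2 => simp [coreList] at h2

lemma dup_of_hp {R : Proc → List (Act × Act) → Proc → Prop} (h : IsFRHpBisim E R) :
    Dup E (fun P Q => ∃ hist, R P hist Q) := by
  intro P Q hR
  obtain ⟨hist, hR⟩ := hR
  obtain ⟨c1, c2, c3, c4⟩ := h P hist Q hR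
  refine ⟨?_, ?_, ?_, ?_⟩
  · intro x P' hs
    obtain ⟨y, Q', h1, h2, h3⟩ := c1 x P' hs
    exact ⟨{y}, Q', h1, by simp [coreSet, h2], ⟨_, h3⟩⟩
  · intro y Q' hs
    obtain ⟨x, P', h1, _, _⟩ := c2 y Q' hs
    exact ⟨{x}, P', h1⟩
  · intro x P' hs
    obtain ⟨y, Q', h1, h2, h3⟩ := c3 x P' hs
    exact ⟨{y}, Q', h1, by simp [coreSet, h2], ⟨_, h3⟩⟩
  · intro y Q' hs
    obtain ⟨x, P', h1, _, _⟩ := c4 y Q' hs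
    exact ⟨{x}, P', h1⟩

end Expansion6

theorem milner_expansion_fails (E : Env) (a b : Act) :
    ¬ PomBisimFR E (.par (.act a) (.act b)) (.sum (.seq (.act a) (.act b)) (.seq (.act b) (.act a))) ∧
    ¬ StepBisimFR E (.par (.act a) (.act b)) (.sum (.seq (.act a) (.act b)) (.seq (.act b) (.act a))) ∧
    ¬ HpBisimFR E (.par (.act a) (.act b)) (.sum (.seq (.act a) (.act b)) (.seq (.act b) (.act a))) ∧
    ¬ HhpBisimFR E (.par (.act a) (.act b)) (.sum (.seq (.act a) (.act b)) (.seq (.act b) (.act a))) := by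
  refine ⟨?_, ?_, ?_, ?_⟩
  · rintro ⟨R, hb, hR⟩
    exact expansion_game E a b R (dup_of_pom hb) hR
  · rintro ⟨R, hb, hR⟩
    exact expansion_game E a b R (dup_of_step hb) hR
  · rintro ⟨R, hb, hR⟩
    exact expansion_game E a b _ (dup_of_hp hb) ⟨[], hR⟩
  · rintro ⟨R, hb, _, hR⟩
    exact expansion_game E a b _ (dup_of_hp hb) ⟨[], hR⟩

end RCTC
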